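/- arXiv:math/0309392 — 3 statements merged into one kernel-verified Lean document; each statement's English description precedes it below -/
import Mathlib

section
/- Let (ΛV, d) be the free commutative DG algebra ΛV = Λ(x₁, x₂, y₁, y₂, y₃) over ℚ with |x₁| = |x₂| = 2, |y₁| = |y₂| = |y₃| = 3, dx₁ = dx₂ = 0, dy₁ = x₁², dy₂ = x₁x₂, dy₃ = x₂². Then the cohomology H(ΛV) is finite-dimensional of total dimension 6, with dim H⁰ = 1, the classes [x₁], [x₂] spanning a 2-dimensional space of word-length-1 classes, exactly two linearly independent classes of word-length 2, and a 1-dimensional top class of word-length 3. -/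
/-!
Write the monomials as `x₁^a x₂^b y_S`. The Leibniz rule determines `d` on them, and an explicit
homotopy `h`, which turns a factor `x₁²` of a monomial without `y₁` into `y₁` (with a few
corrections when `a ≤ 1`), satisfies `id = d h + h d + P` with `P v = ∑ₖ φₖ(v) wₖ`. Here
`w₀, …, w₅` are the cocycles `1, x₁, x₂, x₁y₂ - x₂y₁, x₁y₃ - x₂y₂, x₁x₂y₂ - x₁²y₃`, and `φₖ` is
the coordinate of a monomial of `wₖ` that occurs in no boundary and in no other `wₗ`. So every
cocycle is cohomologous to a combination of the `wₖ`, and the `φₖ`, which descend to cohomology,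
show that the classes `[wₖ]` are independent. Each `wₖ` is homogeneous, and `φₖ` sees a single
word length, so the same argument computes every word-length piece.
-/

/-- Index type for the monomial basis `x₁^a x₂^b y₁^{e₁} y₂^{e₂} y₃^{e₃}` of
`Λ(x₁, x₂, y₁, y₂, y₃)`. -/
abbrev MIdx : Type := ℕ × ℕ × Bool × Bool × Bool

/-- Word length of a monomial. -/
def mLen (i : MIdx) : ℕ :=
  i.1 + i.2.1 + i.2.2.1.toNat + i.2.2.2.1.toNat + i.2.2.2.2.toNat

/-- Number of odd (exterior) factors of a monomial; its parity is the parity of the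
topological degree. -/
def mOdd (i : MIdx) : ℕ :=
  i.2.2.1.toNat + i.2.2.2.1.toNat + i.2.2.2.2.toNat

theorem map_pow_mul_of_map_mul {M : Type*} [Monoid M] (f : M → M) {u : M}
    (hu : ∀ z, f (u * z) = u * f z) (n : ℕ) (z : M) : f (u ^ n * z) = u ^ n * f z := by
  induction n with
  | zero => simp
  | succ n ih => rw [pow_succ', mul_assoc, hu, ih, mul_assoc]

theorem Module.Basis.repr_eq_zero_of_mem_span_image {R M ι : Type*} [Semiring R]
    [AddCommMonoid M] [Module R M] (b : Module.Basis ι R M) {s : Set ι} {i : ι} (hi : i ∉ s)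
    {v : M} (hv : v ∈ Submodule.span R (b '' s)) : b.repr v i = 0 :=
  Finsupp.notMem_support_iff.mp fun h => hi (b.repr_support_subset_of_mem_span s hv h)

section Contraction
variable {K V ι : Type*} [Field K] [AddCommGroup V] [Module K V] [Fintype ι] [DecidableEq ι]

abbrev boundaries (d : V →ₗ[K] V) : Submodule K (LinearMap.ker d) :=
  (LinearMap.range d).comap (LinearMap.ker d).subtype

structure CocycleContraction (d : V →ₗ[K] V) (w : ι → V) where
  homotopy : V →ₗ[K] V
  coord : ι → Module.Dual K V
  w_mem_ker : ∀ k, w k ∈ LinearMap.ker d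
  coord_d : ∀ k v, coord k (d v) = 0
  coord_w : ∀ k l, coord k (w l) = if k = l then 1 else 0
  eq_homotopy_add : ∀ v, v = d (homotopy v) + homotopy (d v) + ∑ k, coord k v • w k

namespace CocycleContraction
variable {d : V →ₗ[K] V} {w : ι → V} (C : CocycleContraction d w)

def cls (k : ι) : LinearMap.ker d ⧸ boundaries d :=
  (boundaries d).mkQ ⟨w k, C.w_mem_ker k⟩

theorem mkQ_eq_sum (z : LinearMap.ker d) :
    (boundaries d).mkQ z = ∑ k, C.coord k z • C.cls k := by
  have hz := C.eq_homotopy_add z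
  rw [LinearMap.mem_ker.mp z.2, map_zero, add_zero] at hz
  have hsum : ∑ k, C.coord k z • C.cls k =
      (boundaries d).mkQ (∑ k, C.coord k z • ⟨w k, C.w_mem_ker k⟩) := by
    simp only [map_sum, map_smul, cls]
  rw [hsum, Submodule.mkQ_apply, Submodule.mkQ_apply, Submodule.Quotient.eq, Submodule.mem_comap,
    LinearMap.mem_range]
  refine ⟨C.homotopy z, ?_⟩
  simp only [Submodule.subtype_apply, Submodule.coe_sub, Submodule.coe_sum, Submodule.coe_smul]
  rw [eq_sub_iff_add_eq, ← hz]

def coordOnCohomology : (LinearMap.ker d ⧸ boundaries d) →ₗ[K] ι → K :=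
  (boundaries d).liftQ (LinearMap.pi fun k => C.coord k ∘ₗ (LinearMap.ker d).subtype) <| by
    rintro ⟨_, _⟩ ⟨v, rfl⟩
    ext k
    simp [C.coord_d]

theorem linearIndependent_cls : LinearIndependent K C.cls := by
  refine LinearIndependent.of_comp C.coordOnCohomology ?_
  convert (Pi.basisFun K ι).linearIndependent
  ext l k
  simp [coordOnCohomology, cls, C.coord_w, Pi.single_apply]

noncomputable def cohomologyBasis : Module.Basis ι K (LinearMap.ker d ⧸ boundaries d) :=
  .mk C.linearIndependent_cls <| by
    rintro x -
    obtain ⟨z, rfl⟩ := (boundaries d).mkQ_surjective x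
    rw [C.mkQ_eq_sum]
    exact Submodule.sum_mem _ fun k _ => Submodule.smul_mem _ _ (Submodule.subset_span ⟨k, rfl⟩)

theorem finrank_cohomology (C : CocycleContraction d w) :
    Module.finrank K (LinearMap.ker d ⧸ boundaries d) = Fintype.card ι :=
  Module.finrank_eq_card_basis C.cohomologyBasis

theorem map_mkQ_comap_eq_span (S : Submodule K V) (s : Finset ι)
    (hcoord : ∀ k ∉ s, ∀ v ∈ S, C.coord k v = 0) (hw : ∀ k ∈ s, w k ∈ S) :
    (S.comap (LinearMap.ker d).subtype).map (boundaries d).mkQ =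
      Submodule.span K (C.cls '' s) := by
  apply le_antisymm
  · rintro _ ⟨z, hz, rfl⟩
    rw [C.mkQ_eq_sum]
    refine Submodule.sum_mem _ fun k _ => ?_
    by_cases hk : k ∈ s
    · exact Submodule.smul_mem _ _ (Submodule.subset_span ⟨k, hk, rfl⟩)
    · simp [hcoord k hk z hz]
  · rw [Submodule.span_le]
    rintro _ ⟨k, hk, rfl⟩
    exact ⟨⟨w k, C.w_mem_ker k⟩, hw k hk, rfl⟩

theorem finrank_span_image_cls (s : Finset ι) :
    Module.finrank K (Submodule.span K (C.cls '' s)) = s.card := by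
  rw [Set.image_eq_range]
  simpa [Function.comp_def] using
    finrank_span_eq_card (C.linearIndependent_cls.comp ((↑) : s → ι) Subtype.val_injective)

end CocycleContraction
end Contraction

section Model
variable {A : Type} [Ring A] [Algebra ℚ A] (bb : Module.Basis MIdx ℚ A)

noncomputable def dMonomial : MIdx → A
  | (a, b, true, false, false) => bb (a + 2, b, false, false, false)
  | (a, b, false, true, false) => bb (a + 1, b + 1, false, false, false)
  | (a, b, false, false, true) => bb (a, b + 2, false, false, false)
  | (a, b, true, true, false) =>
      bb (a + 2, b, false, true, false) - bb (a + 1, b + 1, true, false, false)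
  | (a, b, true, false, true) =>
      bb (a + 2, b, false, false, true) - bb (a, b + 2, true, false, false)
  | (a, b, false, true, true) =>
      bb (a + 1, b + 1, false, false, true) - bb (a, b + 2, false, true, false)
  | (a, b, true, true, true) =>
      bb (a + 2, b, false, true, true) - bb (a + 1, b + 1, true, false, true) +
        bb (a, b + 2, true, true, false)
  | (_, _, false, false, false) => 0

noncomputable def homotopyMonomial : MIdx → A
  | (a + 2, b, false, e₂, e₃) => bb (a, b, true, e₂, e₃)
  | (1, b + 1, false, false, false) => bb (0, b, false, true, false)
  | (0, b + 2, false, false, false) => bb (0, b, false, false, true)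
  | (1, 1, false, true, false) => bb (0, 0, true, false, true)
  | (1, b + 2, false, true, false) =>
      bb (0, b + 1, true, false, true) - bb (1, b, false, true, true)
  | (1, b + 1, false, false, true) => bb (0, b, false, true, true)
  | _ => 0

def harmonicMonomial : Fin 6 → MIdx :=
  ![(0, 0, false, false, false), (1, 0, false, false, false), (0, 1, false, false, false),
    (1, 0, false, true, false), (1, 0, false, false, true), (1, 1, false, true, false)]

noncomputable def harmonicRep : Fin 6 → A :=
  ![bb (0, 0, false, false, false), bb (1, 0, false, false, false),
    bb (0, 1, false, false, false),
    bb (1, 0, false, true, false) - bb (0, 1, true, false, false),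
    bb (1, 0, false, false, true) - bb (0, 1, false, true, false),
    bb (1, 1, false, true, false) - bb (2, 0, false, false, true)]

end Model

section Leibniz
variable {A : Type} [Ring A] [Algebra ℚ A] {x₁ x₂ y₁ y₂ y₃ : A} {bb : Module.Basis MIdx ℚ A}

theorem x_pow_mul_bb
    (hbb : ∀ (a b : ℕ) (e₁ e₂ e₃ : Bool),
      bb (a, b, e₁, e₂, e₃) =
        x₁ ^ a * x₂ ^ b * (if e₁ then y₁ else 1) * (if e₂ then y₂ else 1) *
          (if e₃ then y₃ else 1))
    (hx₁c : ∀ a : A, x₁ * a = a * x₁) (a b c e : ℕ) (e₁ e₂ e₃ : Bool) :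
    x₁ ^ a * (x₂ ^ b * bb (c, e, e₁, e₂, e₃)) = bb (a + c, b + e, e₁, e₂, e₃) := by
  have hcomm : x₂ ^ b * x₁ ^ c = x₁ ^ c * x₂ ^ b := (Commute.pow_pow (hx₁c x₂) c b).eq.symm
  simp only [hbb, pow_add, mul_assoc]
  rw [← mul_assoc (x₂ ^ b), hcomm, mul_assoc]

theorem x_pow_mul_dMonomial
    (hbb : ∀ (a b : ℕ) (e₁ e₂ e₃ : Bool),
      bb (a, b, e₁, e₂, e₃) =
        x₁ ^ a * x₂ ^ b * (if e₁ then y₁ else 1) * (if e₂ then y₂ else 1) *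
          (if e₃ then y₃ else 1))
    (hx₁c : ∀ a : A, x₁ * a = a * x₁) (a b : ℕ) (e₁ e₂ e₃ : Bool) :
    x₁ ^ a * (x₂ ^ b * dMonomial bb (0, 0, e₁, e₂, e₃)) = dMonomial bb (a, b, e₁, e₂, e₃) := by
  cases e₁ <;> cases e₂ <;> cases e₃ <;>
    simp only [dMonomial, mul_add, mul_sub, mul_zero, x_pow_mul_bb hbb hx₁c, add_zero, zero_add]

theorem d_bb_eq_x_pow_mul
    (hbb : ∀ (a b : ℕ) (e₁ e₂ e₃ : Bool),
      bb (a, b, e₁, e₂, e₃) =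
        x₁ ^ a * x₂ ^ b * (if e₁ then y₁ else 1) * (if e₂ then y₂ else 1) *
          (if e₃ then y₃ else 1))
    (d : A →ₗ[ℚ] A) (hx₁ : x₁ ∈ LinearMap.ker d) (hx₂ : x₂ ∈ LinearMap.ker d)
    (hleibeven : ∀ a ∈ Submodule.span ℚ (bb '' {i | Even (mOdd i)}), ∀ b : A,
      d (a * b) = d a * b + a * d b) (a b : ℕ) (e₁ e₂ e₃ : Bool) :
    d (bb (a, b, e₁, e₂, e₃)) = x₁ ^ a * (x₂ ^ b * d (bb (0, 0, e₁, e₂, e₃))) := by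
  have hmul : ∀ x ∈ LinearMap.ker d, x ∈ Submodule.span ℚ (bb '' {i | Even (mOdd i)}) →
      ∀ z, d (x * z) = x * d z := by
    intro x hx hxe z
    rw [hleibeven x hxe, LinearMap.mem_ker.mp hx, zero_mul, zero_add]
  have hx₁e : x₁ ∈ Submodule.span ℚ (bb '' {i | Even (mOdd i)}) :=
    Submodule.subset_span ⟨(1, 0, false, false, false), by simp [mOdd], by simp [hbb]⟩
  have hx₂e : x₂ ∈ Submodule.span ℚ (bb '' {i | Even (mOdd i)}) :=
    Submodule.subset_span ⟨(0, 1, false, false, false), by simp [mOdd], by simp [hbb]⟩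
  have hsplit : bb (a, b, e₁, e₂, e₃) = x₁ ^ a * (x₂ ^ b * bb (0, 0, e₁, e₂, e₃)) := by
    simp only [hbb, pow_zero, one_mul, mul_assoc]
  rw [hsplit, map_pow_mul_of_map_mul d (hmul x₁ hx₁ hx₁e),
    map_pow_mul_of_map_mul d (hmul x₂ hx₂ hx₂e)]

theorem d_bb_exterior
    (hbb : ∀ (a b : ℕ) (e₁ e₂ e₃ : Bool),
      bb (a, b, e₁, e₂, e₃) =
        x₁ ^ a * x₂ ^ b * (if e₁ then y₁ else 1) * (if e₂ then y₂ else 1) *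
          (if e₃ then y₃ else 1))
    (hx₁c : ∀ a : A, x₁ * a = a * x₁) (hx₂c : ∀ a : A, x₂ * a = a * x₂)
    (d : A →ₗ[ℚ] A)
    (hy₁ : d y₁ = x₁ ^ 2) (hy₂ : d y₂ = x₁ * x₂) (hy₃ : d y₃ = x₂ ^ 2)
    (hleibeven : ∀ a ∈ Submodule.span ℚ (bb '' {i | Even (mOdd i)}), ∀ b : A,
      d (a * b) = d a * b + a * d b)
    (hleibodd : ∀ a ∈ Submodule.span ℚ (bb '' {i | Odd (mOdd i)}), ∀ b : A,
      d (a * b) = d a * b - a * d b) (e₁ e₂ e₃ : Bool) :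
    d (bb (0, 0, e₁, e₂, e₃)) = dMonomial bb (0, 0, e₁, e₂, e₃) := by
  have hy₁o : y₁ ∈ Submodule.span ℚ (bb '' {j | Odd (mOdd j)}) :=
    Submodule.subset_span ⟨(0, 0, true, false, false), by simp [mOdd], by simp [hbb]⟩
  have hy₂o : y₂ ∈ Submodule.span ℚ (bb '' {j | Odd (mOdd j)}) :=
    Submodule.subset_span ⟨(0, 0, false, true, false), by simp [mOdd], by simp [hbb]⟩
  have hy₁₂e : y₁ * y₂ ∈ Submodule.span ℚ (bb '' {j | Even (mOdd j)}) :=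
    Submodule.subset_span ⟨(0, 0, true, true, false), by simp [mOdd], by simp [hbb]⟩
  have h1e : (1 : A) ∈ Submodule.span ℚ (bb '' {j | Even (mOdd j)}) :=
    Submodule.subset_span ⟨(0, 0, false, false, false), by simp [mOdd], by simp [hbb]⟩
  have hx₁₂ : ∀ z : A, z * (x₁ * x₂) = x₁ * x₂ * z := fun z =>
    (Commute.mul_left (hx₁c z) (hx₂c z)).eq.symm
  have hx₂₂ : ∀ z : A, z * x₂ ^ 2 = x₂ ^ 2 * z := fun z => (Commute.pow_left (hx₂c z) 2).eq.symm
  cases e₁ <;> cases e₂ <;> cases e₃ <;> simp only [dMonomial, hbb] <;> norm_num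
  · simpa using hleibeven 1 h1e 1
  · exact hy₃
  · exact hy₂
  · rw [hleibodd y₂ hy₂o, hy₂, hy₃, hx₂₂, mul_assoc]
  · exact hy₁
  · rw [hleibodd y₁ hy₁o, hy₁, hy₃, hx₂₂]
  · rw [hleibodd y₁ hy₁o, hy₁, hy₂, hx₁₂]
  · rw [hleibeven _ hy₁₂e, hleibodd y₁ hy₁o, hy₁, hy₂, hy₃, hx₁₂, hx₂₂]
    noncomm_ring

end Leibniz

section Model
variable {A : Type} [Ring A] [Algebra ℚ A] (bb : Module.Basis MIdx ℚ A)

theorem coord_harmonicMonomial_dMonomial (k : Fin 6) (i : MIdx) :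
    bb.coord (harmonicMonomial k) (dMonomial bb i) = 0 := by
  obtain ⟨a, b, _ | _, _ | _, _ | _⟩ := i <;> fin_cases k <;>
    simp [dMonomial, harmonicMonomial]

theorem coord_harmonicMonomial_harmonicRep (k l : Fin 6) :
    bb.coord (harmonicMonomial k) (harmonicRep bb l) = if k = l then 1 else 0 := by
  fin_cases k <;> fin_cases l <;> simp [harmonicMonomial, harmonicRep]

theorem harmonicRep_mem_span (k : Fin 6) :
    harmonicRep bb k ∈ Submodule.span ℚ (bb '' {i | mLen i = mLen (harmonicMonomial k)}) := by
  have hmem : ∀ i l, mLen i = l → bb i ∈ Submodule.span ℚ (bb '' {j | mLen j = l}) :=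
    fun i _ hi => Submodule.subset_span ⟨i, hi, rfl⟩
  fin_cases k
  all_goals first
    | exact hmem _ _ rfl
    | exact Submodule.sub_mem _ (hmem _ _ rfl) (hmem _ _ rfl)

variable {d : A →ₗ[ℚ] A}

theorem basis_eq_homotopy_add (hd : ∀ i, d (bb i) = dMonomial bb i) (i : MIdx) :
    bb i = d (bb.constr ℚ (homotopyMonomial bb) (bb i)) +
      bb.constr ℚ (homotopyMonomial bb) (d (bb i)) +
      ∑ k, bb.coord (harmonicMonomial k) (bb i) • harmonicRep bb k := by
  obtain ⟨_ | _ | a, _ | _ | b, _ | _, _ | _, _ | _⟩ := i <;>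
    simp [hd, Module.Basis.constr_basis, dMonomial, homotopyMonomial, Fin.sum_univ_six,
      harmonicMonomial, harmonicRep, Finsupp.single_apply]

noncomputable def monomialContraction (hd : ∀ i, d (bb i) = dMonomial bb i) :
    CocycleContraction d (harmonicRep bb) where
  homotopy := bb.constr ℚ (homotopyMonomial bb)
  coord k := bb.coord (harmonicMonomial k)
  w_mem_ker k := LinearMap.mem_ker.mpr <| by fin_cases k <;> simp [harmonicRep, hd, dMonomial]
  coord_d k v := by
    have : bb.coord (harmonicMonomial k) ∘ₗ d = 0 :=
      bb.ext fun i => by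
        rw [LinearMap.comp_apply, hd, LinearMap.zero_apply]
        exact coord_harmonicMonomial_dMonomial bb k i
    exact LinearMap.congr_fun this v
  coord_w := coord_harmonicMonomial_harmonicRep bb
  eq_homotopy_add v := by
    have : (LinearMap.id : A →ₗ[ℚ] A) = d ∘ₗ bb.constr ℚ (homotopyMonomial bb) +
        bb.constr ℚ (homotopyMonomial bb) ∘ₗ d +
        ∑ k, (bb.coord (harmonicMonomial k)).smulRight (harmonicRep bb k) :=
      bb.ext fun i => by simpa using basis_eq_homotopy_add bb hd i
    simpa using LinearMap.congr_fun this v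

variable {bb}

theorem map_mkQ_comap_span_mLen (hd : ∀ i, d (bb i) = dMonomial bb i) (l : ℕ) :
    ((Submodule.span ℚ (bb '' {i | mLen i = l})).comap (LinearMap.ker d).subtype).map
        (boundaries d).mkQ =
      Submodule.span ℚ ((monomialContraction bb hd).cls ''
        ↑(Finset.univ.filter fun k => mLen (harmonicMonomial k) = l)) := by
  refine (monomialContraction bb hd).map_mkQ_comap_eq_span _ _ (fun k hk v hv => ?_) fun k hk => ?_
  · exact bb.repr_eq_zero_of_mem_span_image (by simpa using hk) hv
  · simpa [(Finset.mem_filter.mp hk).2] using harmonicRep_mem_span bb k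

theorem finrank_map_mkQ_comap_span_mLen (hd : ∀ i, d (bb i) = dMonomial bb i) (l : ℕ) :
    Module.finrank ℚ (((Submodule.span ℚ (bb '' {i | mLen i = l})).comap
        (LinearMap.ker d).subtype).map (boundaries d).mkQ) =
      (Finset.univ.filter fun k => mLen (harmonicMonomial k) = l).card := by
  rw [map_mkQ_comap_span_mLen hd, CocycleContraction.finrank_span_image_cls]

end Model

theorem stmt_9_general
    (A : Type) [Ring A] [Algebra ℚ A]
    (x₁ x₂ y₁ y₂ y₃ : A)
    -- the monomials form a basis (freeness of ΛV)
    (bb : Module.Basis MIdx ℚ A)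
    (hbb : ∀ (a b : ℕ) (e₁ e₂ e₃ : Bool),
      bb (a, b, e₁, e₂, e₃) =
        x₁ ^ a * x₂ ^ b * (if e₁ then y₁ else 1) * (if e₂ then y₂ else 1) *
          (if e₃ then y₃ else 1))
    -- graded commutativity
    (hx₁c : ∀ a : A, x₁ * a = a * x₁) (hx₂c : ∀ a : A, x₂ * a = a * x₂)
    -- the differential
    (d : A →ₗ[ℚ] A)
    (hx₁ : x₁ ∈ LinearMap.ker d) (hx₂ : x₂ ∈ LinearMap.ker d)
    (hy₁ : d y₁ = x₁ ^ 2) (hy₂ : d y₂ = x₁ * x₂) (hy₃ : d y₃ = x₂ ^ 2)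
    -- graded Leibniz rule (signs are governed by the parity of the number of odd
    -- factors, all other generators being of even degree)
    (hleibeven : ∀ a ∈ Submodule.span ℚ (bb '' {i | Even (mOdd i)}), ∀ b : A,
      d (a * b) = d a * b + a * d b)
    (hleibodd : ∀ a ∈ Submodule.span ℚ (bb '' {i | Odd (mOdd i)}), ∀ b : A,
      d (a * b) = d a * b - a * d b) :
    -- conclusion: with H = ker d / im d and H_k the classes of cocycles of word
    -- length k:
    Module.finrank ℚ
        (LinearMap.ker d ⧸
          Submodule.comap (LinearMap.ker d).subtype (LinearMap.range d)) = 6 ∧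
    Module.finrank ℚ
        (Submodule.map
          (Submodule.comap (LinearMap.ker d).subtype (LinearMap.range d)).mkQ
          (Submodule.comap (LinearMap.ker d).subtype
            (Submodule.span ℚ (bb '' {i | mLen i = 0})))) = 1 ∧
    (Submodule.map
        (Submodule.comap (LinearMap.ker d).subtype (LinearMap.range d)).mkQ
        (Submodule.comap (LinearMap.ker d).subtype
          (Submodule.span ℚ (bb '' {i | mLen i = 1})))
      = Submodule.span ℚ
          {(Submodule.comap (LinearMap.ker d).subtype (LinearMap.range d)).mkQ
              ⟨x₁, hx₁⟩,
           (Submodule.comap (LinearMap.ker d).subtype (LinearMap.range d)).mkQ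
              ⟨x₂, hx₂⟩}) ∧
    Module.finrank ℚ
        (Submodule.map
          (Submodule.comap (LinearMap.ker d).subtype (LinearMap.range d)).mkQ
          (Submodule.comap (LinearMap.ker d).subtype
            (Submodule.span ℚ (bb '' {i | mLen i = 1})))) = 2 ∧
    Module.finrank ℚ
        (Submodule.map
          (Submodule.comap (LinearMap.ker d).subtype (LinearMap.range d)).mkQ
          (Submodule.comap (LinearMap.ker d).subtype
            (Submodule.span ℚ (bb '' {i | mLen i = 2})))) = 2 ∧
    Module.finrank ℚ
        (Submodule.map
          (Submodule.comap (LinearMap.ker d).subtype (LinearMap.range d)).mkQ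
          (Submodule.comap (LinearMap.ker d).subtype
            (Submodule.span ℚ (bb '' {i | mLen i = 3})))) = 1 := by
  have hd : ∀ i, d (bb i) = dMonomial bb i := by
    rintro ⟨a, b, e₁, e₂, e₃⟩
    rw [d_bb_eq_x_pow_mul hbb d hx₁ hx₂ hleibeven,
      d_bb_exterior hbb hx₁c hx₂c d hy₁ hy₂ hy₃ hleibeven hleibodd, x_pow_mul_dMonomial hbb hx₁c]
  have hx : harmonicRep bb 1 = x₁ ∧ harmonicRep bb 2 = x₂ := by simp [harmonicRep, hbb]
  refine ⟨(monomialContraction bb hd).finrank_cohomology.trans (Fintype.card_fin 6),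
    (finrank_map_mkQ_comap_span_mLen hd 0).trans rfl, ?_,
    (finrank_map_mkQ_comap_span_mLen hd 1).trans rfl,
    (finrank_map_mkQ_comap_span_mLen hd 2).trans rfl,
    (finrank_map_mkQ_comap_span_mLen hd 3).trans rfl⟩
  rw [map_mkQ_comap_span_mLen hd 1,
    show (Finset.univ.filter fun k => mLen (harmonicMonomial k) = 1) = {1, 2} from rfl]
  simp only [Finset.coe_pair, Set.image_pair, CocycleContraction.cls]
  congr! <;> simp [hx]

/-- For `ΛV = Λ(x₁, x₂, y₁, y₂, y₃)` with `|x₁| = |x₂| = 2`,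
`|y₁| = |y₂| = |y₃| = 3`, `dx₁ = dx₂ = 0`, `dy₁ = x₁²`, `dy₂ = x₁x₂`, `dy₃ = x₂²`,
the cohomology is 6-dimensional: `dim H⁰ = 1`; the classes `[x₁], [x₂]` span the
word-length-1 cohomology, which is 2-dimensional; there are exactly two linearly
independent classes of word length 2; and there is a 1-dimensional top class of
word length 3. -/
theorem stmt_9
    (A : Type) [Ring A] [Algebra ℚ A]
    (x₁ x₂ y₁ y₂ y₃ : A)
    -- the monomials form a basis (freeness of ΛV)
    (bb : Module.Basis MIdx ℚ A)
    (hbb : ∀ (a b : ℕ) (e₁ e₂ e₃ : Bool),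
      bb (a, b, e₁, e₂, e₃) =
        x₁ ^ a * x₂ ^ b * (if e₁ then y₁ else 1) * (if e₂ then y₂ else 1) *
          (if e₃ then y₃ else 1))
    -- graded commutativity
    (hx₁c : ∀ a : A, x₁ * a = a * x₁) (hx₂c : ∀ a : A, x₂ * a = a * x₂)
    (hy₁₁ : y₁ * y₁ = 0) (hy₂₂ : y₂ * y₂ = 0) (hy₃₃ : y₃ * y₃ = 0)
    (hy₁₂ : y₁ * y₂ = -(y₂ * y₁)) (hy₁₃ : y₁ * y₃ = -(y₃ * y₁))
    (hy₂₃ : y₂ * y₃ = -(y₃ * y₂))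
    -- the differential
    (d : A →ₗ[ℚ] A) (hd2 : d ∘ₗ d = 0)
    (hx₁ : x₁ ∈ LinearMap.ker d) (hx₂ : x₂ ∈ LinearMap.ker d)
    (hy₁ : d y₁ = x₁ ^ 2) (hy₂ : d y₂ = x₁ * x₂) (hy₃ : d y₃ = x₂ ^ 2)
    -- graded Leibniz rule (signs are governed by the parity of the number of odd
    -- factors, all other generators being of even degree)
    (hleibeven : ∀ a ∈ Submodule.span ℚ (bb '' {i | Even (mOdd i)}), ∀ b : A,
      d (a * b) = d a * b + a * d b)
    (hleibodd : ∀ a ∈ Submodule.span ℚ (bb '' {i | Odd (mOdd i)}), ∀ b : A,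
      d (a * b) = d a * b - a * d b) :
    -- conclusion: with H = ker d / im d and H_k the classes of cocycles of word
    -- length k:
    Module.finrank ℚ
        (LinearMap.ker d ⧸
          Submodule.comap (LinearMap.ker d).subtype (LinearMap.range d)) = 6 ∧
    Module.finrank ℚ
        (Submodule.map
          (Submodule.comap (LinearMap.ker d).subtype (LinearMap.range d)).mkQ
          (Submodule.comap (LinearMap.ker d).subtype
            (Submodule.span ℚ (bb '' {i | mLen i = 0})))) = 1 ∧
    (Submodule.map
        (Submodule.comap (LinearMap.ker d).subtype (LinearMap.range d)).mkQ
        (Submodule.comap (LinearMap.ker d).subtype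
          (Submodule.span ℚ (bb '' {i | mLen i = 1})))
      = Submodule.span ℚ
          {(Submodule.comap (LinearMap.ker d).subtype (LinearMap.range d)).mkQ
              ⟨x₁, hx₁⟩,
           (Submodule.comap (LinearMap.ker d).subtype (LinearMap.range d)).mkQ
              ⟨x₂, hx₂⟩}) ∧
    Module.finrank ℚ
        (Submodule.map
          (Submodule.comap (LinearMap.ker d).subtype (LinearMap.range d)).mkQ
          (Submodule.comap (LinearMap.ker d).subtype
            (Submodule.span ℚ (bb '' {i | mLen i = 1})))) = 2 ∧
    Module.finrank ℚ
        (Submodule.map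
          (Submodule.comap (LinearMap.ker d).subtype (LinearMap.range d)).mkQ
          (Submodule.comap (LinearMap.ker d).subtype
            (Submodule.span ℚ (bb '' {i | mLen i = 2})))) = 2 ∧
    Module.finrank ℚ
        (Submodule.map
          (Submodule.comap (LinearMap.ker d).subtype (LinearMap.range d)).mkQ
          (Submodule.comap (LinearMap.ker d).subtype
            (Submodule.span ℚ (bb '' {i | mLen i = 3})))) = 1 :=
  stmt_9_general A x₁ x₂ y₁ y₂ y₃ bb hbb hx₁c hx₂c d hx₁ hx₂ hy₁ hy₂ hy₃ hleibeven hleibodd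
end

section
/- Let H be a finite-dimensional graded-commutative ℚ-algebra satisfying Poincaré duality with formal dimension N and fundamental class μ ∈ H^N, arising as the cohomology of a minimal algebra ΛV. Then e₀(ΛV) = e₀(μ): the Toomer invariant of the algebra equals the Toomer invariant of the fundamental class. -/
/-!
Write a cocycle `z` as a sum of homogeneous cocycles `zᵢ`, and suppose `z` is cohomologous to an
element of `Λ^{≥n+1}V`. That property survives multiplication by any cocycle `w`, since
`Λ^{≥n+1}V` is an ideal. If some `zᵢ` is not a coboundary, take `i` minimal and let `w` be
Poincaré dual to `zᵢ`: then `zⱼ w` is a coboundary for `j < i` by minimality and for `j > i`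
because its degree exceeds `N`, so `z w` is cohomologous to a nonzero multiple of `μ`. Thus
`p_n^*[μ] ≠ 0` forces every cocycle killed by `p_n^*` to be a coboundary.
-/

open Submodule LinearMap

section Leibniz

variable {R A : Type*} [CommRing R] [Ring A] [Algebra R A] {G : ℕ → Submodule R A}
  {d : A →ₗ[R] A}

theorem apply_mul_of_apply_eq_zero (hGfull : ⨆ i, G i = ⊤)
    (hleib : ∀ i : ℕ, ∀ a ∈ G i, ∀ b : A,
      d (a * b) = d a * b + ((-1 : R) ^ i) • (a * d b))
    {w : A} (hw : d w = 0) (v : A) : d (v * w) = d v * w := by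
  refine iSup_induction G (motive := fun v => d (v * w) = d v * w)
    (hGfull ▸ mem_top : v ∈ ⨆ i, G i) ?_ ?_ ?_
  · intro i a ha
    rw [hleib i a ha, hw, mul_zero, smul_zero, add_zero]
  · rw [zero_mul, map_zero, zero_mul]
  · intro x y hx hy
    rw [add_mul, map_add, hx, hy, map_add, add_mul]

theorem mul_mem_range_of_mem_range (hGfull : ⨆ i, G i = ⊤)
    (hleib : ∀ i : ℕ, ∀ a ∈ G i, ∀ b : A,
      d (a * b) = d a * b + ((-1 : R) ^ i) • (a * d b))
    {w : A} (hw : d w = 0) {v : A} (hv : v ∈ range d) : v * w ∈ range d := by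
  obtain ⟨u, rfl⟩ := hv
  exact ⟨u * w, apply_mul_of_apply_eq_zero hGfull hleib hw u⟩

end Leibniz

theorem mul_mem_iSup_ge {R A : Type*} [CommSemiring R] [Semiring A] [Algebra R A]
    {W : ℕ → Submodule R A} (hWfull : ⨆ k, W k = ⊤)
    (hWmul : ∀ j k : ℕ, ∀ a ∈ W j, ∀ b ∈ W k, a * b ∈ W (j + k)) {n : ℕ} {q : A}
    (hq : q ∈ ⨆ m, ⨆ (_ : n ≤ m), W m) (w : A) : q * w ∈ ⨆ m, ⨆ (_ : n ≤ m), W m := by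
  refine (iSup₂_le fun m hm a ha => ?_ :
    ⨆ m, ⨆ (_ : n ≤ m), W m ≤ comap (mulRight R w) (⨆ m, ⨆ (_ : n ≤ m), W m)) hq
  refine iSup_induction W (motive := fun w => a * w ∈ ⨆ m, ⨆ (_ : n ≤ m), W m)
    (hWfull ▸ mem_top : w ∈ ⨆ k, W k) ?_ ?_ ?_
  · exact fun k b hb => mem_iSup_of_mem (m + k) <| mem_iSup_of_mem (by omega) (hWmul m k a ha b hb)
  · rw [mul_zero]
    exact zero_mem _
  · intro x y hx hy
    rw [mul_add]
    exact add_mem hx hy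

theorem apply_component_eq_zero {R M : Type*} [Ring R] [AddCommGroup M] [Module R M]
    {G : ℕ → Submodule R M} (hGindep : iSupIndep G) {d : M →ₗ[R] M}
    (hdeg : ∀ i, ∀ a ∈ G i, d a ∈ G (i + 1)) {f : ℕ →₀ M} (hf : ∀ i, f i ∈ G i)
    (hz : d (f.sum fun _ x => x) = 0) (i : ℕ) : d (f i) = 0 := by
  by_cases hi : i ∈ f.support
  · exact (iSupIndep_iff_finsetSum_eq_zero_imp_eq_zero _).mp
      (hGindep.comp Nat.succ_injective) f.support (fun i => d (f i))
      (fun i _ => hdeg i _ (hf i)) (by rwa [← map_sum]) i hi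
  · rw [Finsupp.notMem_support_iff.mp hi, map_zero]

theorem exists_sub_apply_mem_iff_mem_sup_range {R M : Type*} [Ring R] [AddCommGroup M]
    [Module R M] (d : M →ₗ[R] M) (F : Submodule R M) (z : M) :
    (∃ w, z - d w ∈ F) ↔ z ∈ F ⊔ range d := by
  rw [mem_sup]
  constructor
  · rintro ⟨w, hw⟩
    exact ⟨_, hw, d w, ⟨w, rfl⟩, sub_add_cancel _ _⟩
  · rintro ⟨y, hy, _, ⟨w, rfl⟩, rfl⟩
    exact ⟨w, by rwa [add_sub_cancel_right]⟩

section PoincareDuality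

variable {K A : Type*} [Field K] [Ring A] [Algebra K A] {G : ℕ → Submodule K A}
  {d : A →ₗ[K] A} {N : ℕ} {μ : A} {I : Submodule K A}

-- `I` stands for `Λ^{≥n+1}V + im d`.
theorem component_mem_range (hGfull : ⨆ i, G i = ⊤)
    (hGmul : ∀ i j : ℕ, ∀ a ∈ G i, ∀ b ∈ G j, a * b ∈ G (i + j))
    (hleib : ∀ i : ℕ, ∀ a ∈ G i, ∀ b : A,
      d (a * b) = d a * b + ((-1 : K) ^ i) • (a * d b))
    (htop : ∀ i, N < i → ∀ z ∈ G i, d z = 0 → ∃ v, d v = z)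
    (hPD : ∀ i, ∀ z ∈ G i, d z = 0 → (¬ ∃ v, d v = z) →
      ∃ w ∈ G (N - i), d w = 0 ∧ ∃ c : K, c ≠ 0 ∧ ∃ v : A, z * w - c • μ = d v)
    (hBI : range d ≤ I) (hI : ∀ q ∈ I, ∀ w, d w = 0 → q * w ∈ I) (hμ : μ ∉ I)
    {f : ℕ →₀ A} (hf : ∀ i, f i ∈ G i) (hfd : ∀ i, d (f i) = 0)
    (hz : (f.sum fun _ x => x) ∈ I) (i : ℕ) : f i ∈ range d := by
  induction i using Nat.strong_induction_on with
  | _ i ih =>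
    by_contra hi
    obtain ⟨w, hwG, hw, c, hc, v, hv⟩ := hPD i (f i) (hf i) (hfd i) hi
    have hother : ∀ j ≠ i, f j * w ∈ range d := by
      intro j hji
      rcases lt_or_gt_of_ne hji with hlt | hgt
      · exact mul_mem_range_of_mem_range hGfull hleib hw (ih j hlt)
      · refine htop (j + (N - i)) (by omega) _ (hGmul j _ _ (hf j) w hwG) ?_
        rw [apply_mul_of_apply_eq_zero hGfull hleib hw, hfd j, zero_mul]
    have hzw : (f.sum fun _ x => x) * w - f i * w ∈ range d := by
      rw [← Submodule.Quotient.eq, ← mkQ_apply, ← mkQ_apply, Finsupp.sum, Finset.sum_mul,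
        map_sum]
      refine Finset.sum_eq_single i (fun j _ hj => ?_) fun hi => ?_
      · rw [mkQ_apply, Submodule.Quotient.mk_eq_zero]
        exact hother j hj
      · rw [Finsupp.notMem_support_iff.mp hi, zero_mul, map_zero]
    have hcμ := sub_mem (sub_mem (hI _ hz w hw) (hBI hzw)) (hBI ⟨v, hv.symm⟩)
    rw [sub_sub_cancel, sub_sub_cancel] at hcμ
    exact hμ ((smul_mem_iff I hc).mp hcμ)

theorem mem_range_of_apply_eq_zero_of_mem (hGfull : ⨆ i, G i = ⊤) (hGindep : iSupIndep G)
    (hGmul : ∀ i j : ℕ, ∀ a ∈ G i, ∀ b ∈ G j, a * b ∈ G (i + j))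
    (hdeg : ∀ i, ∀ a ∈ G i, d a ∈ G (i + 1))
    (hleib : ∀ i : ℕ, ∀ a ∈ G i, ∀ b : A,
      d (a * b) = d a * b + ((-1 : K) ^ i) • (a * d b))
    (htop : ∀ i, N < i → ∀ z ∈ G i, d z = 0 → ∃ v, d v = z)
    (hPD : ∀ i, ∀ z ∈ G i, d z = 0 → (¬ ∃ v, d v = z) →
      ∃ w ∈ G (N - i), d w = 0 ∧ ∃ c : K, c ≠ 0 ∧ ∃ v : A, z * w - c • μ = d v)
    (hBI : range d ≤ I) (hI : ∀ q ∈ I, ∀ w, d w = 0 → q * w ∈ I) (hμ : μ ∉ I)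
    {z : A} (hz : d z = 0) (hzI : z ∈ I) : z ∈ range d := by
  obtain ⟨f, hf, rfl⟩ := (mem_iSup_iff_exists_finsupp G z).mp (hGfull ▸ mem_top)
  exact sum_mem fun i _ => component_mem_range hGfull hGmul hleib htop hPD hBI hI hμ hf
    (apply_component_eq_zero hGindep hdeg hf hz) hzI i

end PoincareDuality

theorem stmt_12_general
    (A : Type) [Ring A] [Algebra ℚ A]
    -- topological (upper) grading
    (G : ℕ → Submodule ℚ A)
    (hGfull : ⨆ i, G i = ⊤) (hGindep : iSupIndep G)
    (hGmul : ∀ i j : ℕ, ∀ a ∈ G i, ∀ b ∈ G j, a * b ∈ G (i + j))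
    -- word-length grading
    (W : ℕ → Submodule ℚ A)
    (hWfull : ⨆ k, W k = ⊤)
    (hWmul : ∀ j k : ℕ, ∀ a ∈ W j, ∀ b ∈ W k, a * b ∈ W (j + k))
    -- the differential: degree +1, minimal (decomposable), graded Leibniz rule
    (d : A →ₗ[ℚ] A)
    (hdeg : ∀ i, ∀ a ∈ G i, d a ∈ G (i + 1))
    (hleib : ∀ i : ℕ, ∀ a ∈ G i, ∀ b : A,
      d (a * b) = d a * b + ((-1 : ℚ) ^ i) • (a * d b))
    -- Poincaré duality with formal dimension N and fundamental cocycle μ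
    (N : ℕ) (μ : A) (hμcoc : d μ = 0)
    (hμne : ¬ ∃ v : A, d v = μ)
    (htop : ∀ i, N < i → ∀ z ∈ G i, d z = 0 → ∃ v, d v = z)
    (hPD : ∀ i, ∀ z ∈ G i, d z = 0 → (¬ ∃ v, d v = z) →
      ∃ w ∈ G (N - i), d w = 0 ∧ ∃ c : ℚ, c ≠ 0 ∧ ∃ v : A, z * w - c • μ = d v) :
    sInf {n : ℕ | ∀ z : A, d z = 0 →
        (∃ w : A, z - d w ∈ ⨆ m, ⨆ (_ : n + 1 ≤ m), W m) → ∃ w, d w = z}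
      =
    sInf {n : ℕ | ¬ ∃ w : A, μ - d w ∈ ⨆ m, ⨆ (_ : n + 1 ≤ m), W m} := by
  congr 1
  ext n
  simp only [Set.mem_ofPred_eq, exists_sub_apply_mem_iff_mem_sup_range]
  refine ⟨fun h hμ => hμne (h μ hμcoc hμ), fun hμ z hz hzI => ?_⟩
  have hI : ∀ q ∈ (⨆ m, ⨆ (_ : n + 1 ≤ m), W m) ⊔ range d, ∀ w, d w = 0 →
      q * w ∈ (⨆ m, ⨆ (_ : n + 1 ≤ m), W m) ⊔ range d := by
    intro q hq w hw
    obtain ⟨y, hy, _, ⟨v, rfl⟩, rfl⟩ := mem_sup.mp hq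
    rw [add_mul]
    exact add_mem_sup (mul_mem_iSup_ge hWfull hWmul hy w)
      (mul_mem_range_of_mem_range hGfull hleib hw ⟨v, rfl⟩)
  exact mem_range_of_apply_eq_zero_of_mem hGfull hGindep hGmul hdeg hleib htop hPD le_sup_right hI
    hμ hz hzI

/-- Félix–Halperin.  Let `ΛV` be a minimal algebra (word-length
grading `W`, decomposable differential) whose cohomology satisfies Poincaré duality
with formal dimension `N` and fundamental cocycle `μ`.  Then `e₀(ΛV) = e₀(μ)`:
the least `n` for which `p_n : ΛV → ΛV/Λ^{≥ n+1}V` is injective on cohomology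
equals the least `n` for which `p_n^*[μ] ≠ 0`. -/
theorem stmt_12
    (A : Type) [Ring A] [Algebra ℚ A]
    -- topological (upper) grading
    (G : ℕ → Submodule ℚ A)
    (hGfull : ⨆ i, G i = ⊤) (hGindep : iSupIndep G)
    (hGmul : ∀ i j : ℕ, ∀ a ∈ G i, ∀ b ∈ G j, a * b ∈ G (i + j))
    -- word-length grading
    (W : ℕ → Submodule ℚ A)
    (hWfull : ⨆ k, W k = ⊤) (hWindep : iSupIndep W)
    (hWmul : ∀ j k : ℕ, ∀ a ∈ W j, ∀ b ∈ W k, a * b ∈ W (j + k))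
    -- the differential: degree +1, minimal (decomposable), graded Leibniz rule
    (d : A →ₗ[ℚ] A) (hd2 : d ∘ₗ d = 0)
    (hdeg : ∀ i, ∀ a ∈ G i, d a ∈ G (i + 1))
    (hmin : ∀ k, ∀ z ∈ W k, d z ∈ ⨆ m, ⨆ (_ : k + 1 ≤ m), W m)
    (hleib : ∀ i : ℕ, ∀ a ∈ G i, ∀ b : A,
      d (a * b) = d a * b + ((-1 : ℚ) ^ i) • (a * d b))
    -- Poincaré duality with formal dimension N and fundamental cocycle μ
    (N : ℕ) (μ : A) (hμdeg : μ ∈ G N) (hμcoc : d μ = 0)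
    (hμne : ¬ ∃ v : A, d v = μ)
    (htop : ∀ i, N < i → ∀ z ∈ G i, d z = 0 → ∃ v, d v = z)
    (hPD : ∀ i, ∀ z ∈ G i, d z = 0 → (¬ ∃ v, d v = z) →
      ∃ w ∈ G (N - i), d w = 0 ∧ ∃ c : ℚ, c ≠ 0 ∧ ∃ v : A, z * w - c • μ = d v) :
    sInf {n : ℕ | ∀ z : A, d z = 0 →
        (∃ w : A, z - d w ∈ ⨆ m, ⨆ (_ : n + 1 ≤ m), W m) → ∃ w, d w = z}
      =
    sInf {n : ℕ | ¬ ∃ w : A, μ - d w ∈ ⨆ m, ⨆ (_ : n + 1 ≤ m), W m} :=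
  stmt_12_general A G hGfull hGindep hGmul W hWfull hWmul d hdeg hleib N μ hμcoc hμne htop hPD
end

section
/- Let (ΛV, d) be an elliptic minimal algebra with homogeneous-length-l differential which decomposes as a short exact sequence of bigraded cohomology groups 0 → coker(θ*_{k−1−(l−2)}) →^{j*} H^*_k(ΛV) →^{p*} ker(θ*_k) → 0 for k = 1, …, f, where θ* is a derivation of strictly negative upper degree on H(ΛW) raising lower degree by l−2, and ΛW satisfies: H^*_k(ΛW) ≠ 0 for 0 ≤ k ≤ f, with bottom degrees m_k satisfying m_{k+(l−2)} ≥ m_k and top degrees M_k satisfying M_{k+(l−2)} ≥ M_k. Then both ker(θ*_k) and coker(θ*_{k−1−(l−2)}) are nonzero for k = 1, …, f, and hence dim H^*_k(ΛV) ≥ 2 for each k = 1, …, f. -/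
/-!
The derivation `θ*` lowers the upper degree by `2r > 0`. A nonzero class in the bottom degree
of `H_k(ΛW)` is therefore sent below the bottom degree of `H_{k+(l-2)}(ΛW)`, hence to zero, so
`ker θ*_k ≠ 0`; dually, the image of `θ*` into `H_{k-1}(ΛW)` lies in degrees below the top one,
so `coker θ*_{k-1-(l-2)} ≠ 0`. When `k + (l-2) > f` (resp. `k - 1 - (l-2) < 0`) the target
(resp. source) of `θ*` vanishes and the same conclusions are immediate. The short exact
sequence then gives `dim H_k(ΛV) = dim coker + dim ker ≥ 2`.
-/

open Module Submodule LinearMap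

section Graded

variable {R V W : Type*} [Ring R] [AddCommGroup V] [Module R V] [AddCommGroup W] [Module R W]
  {G : ℤ → Submodule R V} {H : ℤ → Submodule R W}

theorem iSupIndep.exists_ne_zero_mem_sInf [IsNoetherian R V] (hG : iSupIndep G)
    (hne : ∃ i, G i ≠ ⊥) : ∃ x ∈ G (sInf {i | G i ≠ ⊥}), x ≠ 0 :=
  (Submodule.ne_bot_iff _).mp (Set.Nonempty.csInf_mem hne (finite_ne_bot_of_iSupIndep hG))

theorem iSupIndep.exists_ne_zero_mem_sSup [IsNoetherian R V] (hG : iSupIndep G)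
    (hne : ∃ i, G i ≠ ⊥) : ∃ x ∈ G (sSup {i | G i ≠ ⊥}), x ≠ 0 :=
  (Submodule.ne_bot_iff _).mp (Set.Nonempty.csSup_mem hne (finite_ne_bot_of_iSupIndep hG))

variable {φ : V →ₗ[R] W} {d : ℤ}

theorem LinearMap.ker_ne_bot_of_lowers_degree (hφ : ∀ i, ∀ x ∈ G i, φ x ∈ H (i - d))
    (hd : 0 < d) {m : ℤ} {x : V} (hx : x ∈ G m) (hx0 : x ≠ 0)
    (hbot : ∀ j, H j ≠ ⊥ → m ≤ j) : ker φ ≠ ⊥ := by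
  have hvanish : H (m - d) = ⊥ := by
    by_contra h
    have := hbot _ h
    omega
  have hφx : φ x = 0 := by simpa [hvanish] using hφ m x hx
  exact (Submodule.ne_bot_iff _).mpr ⟨x, hφx, hx0⟩

theorem LinearMap.range_ne_top_of_lowers_degree (hφ : ∀ i, ∀ x ∈ G i, φ x ∈ H (i - d))
    (hd : 0 < d) (hG : ⨆ i, G i = ⊤) (hH : iSupIndep H) {M : ℤ} {y : W} (hy : y ∈ H M)
    (hy0 : y ≠ 0) (htop : ∀ i, G i ≠ ⊥ → i ≤ M) : range φ ≠ ⊤ := by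
  have hrange : range φ ≤ ⨆ (j) (_ : j ≠ M), H j := by
    rw [range_eq_map, ← hG, Submodule.map_iSup]
    refine iSup_le fun i => ?_
    by_cases hi : G i = ⊥
    · simp [hi]
    · rw [map_le_iff_le_comap]
      intro x hx
      exact le_iSup₂ (f := fun j (_ : j ≠ M) => H j) (i - d) (by have := htop i hi; omega)
        (hφ i x hx)
  intro htop_eq
  have hyrange : y ∈ ⨆ (j) (_ : j ≠ M), H j := hrange (htop_eq ▸ mem_top)
  exact hy0 ((hH M).le_bot ⟨hy, hyrange⟩)

end Graded

theorem two_le_finrank_of_injective_of_ker_eq_range {K A B C : Type*} [DivisionRing K]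
    [AddCommGroup A] [Module K A] [AddCommGroup B] [Module K B] [AddCommGroup C] [Module K C]
    [FiniteDimensional K A] [FiniteDimensional K C] [Nontrivial A]
    {J : A →ₗ[K] B} {P : B →ₗ[K] C} (hJ : Function.Injective J) (hJP : ker P = range J)
    (hP : range P ≠ ⊥) : 2 ≤ finrank K B := by
  have : FiniteDimensional K B :=
    .of_exact (f := J) (g := P.rangeRestrict) (by rw [exact_iff, ker_rangeRestrict, hJP])
      P.surjective_rangeRestrict
  have hA : 0 < finrank K A := finrank_pos
  have hrange : 0 < finrank K (range P) := Nat.pos_of_ne_zero (finrank_eq_zero.not.mpr hP)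
  rw [← finrank_range_add_finrank_ker P, hJP, finrank_range_of_inj hJ]
  omega

/-- mechanism of Case I of Theorem 2.2: no `e₀`-gaps.
Suppose the bigraded cohomology of `ΛV` fits into short exact sequences
`0 → coker θ*_{k-1-(l-2)} → H^*_k(ΛV) → ker θ*_k → 0` for `k = 1,…,f`, where
`θ*` is a derivation of strictly negative upper degree `-2r` on `H(ΛW)` raising
lower degree by `l-2`, and where `H^*_k(ΛW) ≠ 0` for `0 ≤ k ≤ f` with bottom
degrees satisfying `m_{k+(l-2)} ≥ m_k` and top degrees `M_{k+(l-2)} ≥ M_k`.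
Then `ker θ*_k` and `coker θ*_{k-1-(l-2)}` are nonzero for `k = 1,…,f`, and hence
`dim H^*_k(ΛV) ≥ 2` for each `k = 1,…,f`. -/
theorem stmt_18
    (l r : ℕ) (hr : 1 ≤ r) (f : ℤ)
    -- the bigraded pieces H^*_k(ΛW), with upper grading GW
    (HW : ℤ → Type) [∀ k, AddCommGroup (HW k)] [∀ k, Module ℚ (HW k)]
    [∀ k, FiniteDimensional ℚ (HW k)]
    (GW : ∀ k : ℤ, ℤ → Submodule ℚ (HW k))
    (hGWfull : ∀ k, ⨆ i, GW k i = ⊤)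
    (hGWindep : ∀ k, iSupIndep (GW k))
    (hWzero : ∀ k : ℤ, k < 0 ∨ f < k → Subsingleton (HW k))
    -- the pieces H^*_k(ΛV)
    (HV : ℤ → Type) [∀ k, AddCommGroup (HV k)] [∀ k, Module ℚ (HV k)]
    -- θ* raises lower degree by l-2 and has strictly negative upper degree -2r
    (θ : ∀ k m : ℤ, m = k + ((l : ℤ) - 2) → (HW k →ₗ[ℚ] HW m))
    (hθdeg : ∀ (k m : ℤ) (h : m = k + ((l : ℤ) - 2)) (i : ℤ),
      ∀ x ∈ GW k i, θ k m h x ∈ GW m (i - 2 * r))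
    -- H^*_k(ΛW) ≠ 0 for 0 ≤ k ≤ f
    (hWnz : ∀ k : ℤ, 0 ≤ k → k ≤ f → ∃ i, GW k i ≠ ⊥)
    -- bottom degrees: m_{k+(l-2)} ≥ m_k
    (hm : ∀ k : ℤ, 0 ≤ k → k + ((l : ℤ) - 2) ≤ f →
      sInf {i | GW k i ≠ ⊥} ≤ sInf {i | GW (k + ((l : ℤ) - 2)) i ≠ ⊥})
    -- top degrees: M_{k+(l-2)} ≥ M_k
    (hM : ∀ k : ℤ, 0 ≤ k → k + ((l : ℤ) - 2) ≤ f →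
      sSup {i | GW k i ≠ ⊥} ≤ sSup {i | GW (k + ((l : ℤ) - 2)) i ≠ ⊥})
    -- the short exact sequences
    -- 0 → coker θ*_{k-1-(l-2)} → H^*_k(ΛV) → ker θ*_k → 0
    (J : ∀ k : ℤ,
      (HW (k - 1) ⧸ LinearMap.range (θ (k - 1 - ((l : ℤ) - 2)) (k - 1) (by ring)))
        →ₗ[ℚ] HV k)
    (P : ∀ k : ℤ, HV k →ₗ[ℚ] HW k)
    (hJinj : ∀ k : ℤ, 1 ≤ k → k ≤ f → Function.Injective (J k))
    (hexact : ∀ (k : ℤ) (h1 : 1 ≤ k) (h2 : k ≤ f),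
      LinearMap.ker (P k) = LinearMap.range (J k))
    (hPrange : ∀ (k : ℤ) (h1 : 1 ≤ k) (h2 : k ≤ f),
      LinearMap.range (P k) = LinearMap.ker (θ k (k + ((l : ℤ) - 2)) rfl)) :
    ∀ k : ℤ, 1 ≤ k → k ≤ f →
      LinearMap.ker (θ k (k + ((l : ℤ) - 2)) rfl) ≠ ⊥ ∧
      LinearMap.range (θ (k - 1 - ((l : ℤ) - 2)) (k - 1) (by ring)) ≠ ⊤ ∧
      2 ≤ Module.finrank ℚ (HV k) := by
  intro k hk1 hk2
  have hd : (0 : ℤ) < 2 * r := by omega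
  have hker : ker (θ k (k + ((l : ℤ) - 2)) rfl) ≠ ⊥ := by
    obtain ⟨x, hx, hx0⟩ := (hGWindep k).exists_ne_zero_mem_sInf (hWnz k (by omega) hk2)
    refine ker_ne_bot_of_lowers_degree (hθdeg _ _ rfl) hd hx hx0 fun j hj => ?_
    rcases le_or_gt (k + ((l : ℤ) - 2)) f with h | h
    · exact (hm k (by omega) h).trans
        (csInf_le (finite_ne_bot_of_iSupIndep (hGWindep _)).bddBelow hj)
    · have := hWzero _ (Or.inr h)
      exact (hj eq_bot_of_subsingleton).elim
  have hcoker : range (θ (k - 1 - ((l : ℤ) - 2)) (k - 1) (by ring)) ≠ ⊤ := by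
    obtain ⟨y, hy, hy0⟩ :=
      (hGWindep (k - 1)).exists_ne_zero_mem_sSup (hWnz (k - 1) (by omega) (by omega))
    refine range_ne_top_of_lowers_degree (hθdeg _ _ _) hd (hGWfull _) (hGWindep _) hy hy0
      fun i hi => ?_
    rcases le_or_gt 0 (k - 1 - ((l : ℤ) - 2)) with h | h
    · have htop := hM _ h (by omega)
      rw [sub_add_cancel] at htop
      exact (le_csSup (finite_ne_bot_of_iSupIndep (hGWindep _)).bddAbove hi).trans htop
    · have := hWzero _ (Or.inl h)
      exact (hi eq_bot_of_subsingleton).elim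
  have : Nontrivial (HW (k - 1) ⧸ range (θ (k - 1 - ((l : ℤ) - 2)) (k - 1) (by ring))) :=
    Submodule.Quotient.nontrivial_iff.mpr hcoker
  refine ⟨hker, hcoker, two_le_finrank_of_injective_of_ker_eq_range (hJinj k hk1 hk2)
    (hexact k hk1 hk2) ?_⟩
  rwa [hPrange k hk1 hk2]
end
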